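/- arXiv:1909.09205 — 7 statements merged into one kernel-verified Lean document; each statement's English description precedes it below -/
import Mathlib

section
/- Let Φ be an irreducible finite root system in a finite-dimensional real inner product space E, with Weyl group W(Φ). Let X and 𝔞 be linear subspaces of E with dim 𝔞 ≤ dim X. Then there exists w ∈ W(Φ) such that w(𝔞) ∩ X^⊥ = {0}, where X^⊥ denotes the orthogonal complement of X in E. (This is the root-system form of Theorem 3.2 of the paper: E is the Lie algebra of a maximal real split torus identified with its dual via the Killing form, Φ is the set of real roots, X is the span of the restrictions of the rational characters, X^⊥ is the Lie algebra of the maximal almost ℚ-anisotropic subtorus, and the conclusion says that 𝔞 can be conjugated by a Weyl element into almost ℚ-split position.) -/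
open scoped RealInnerProductSpace

/-- The reflection `s_β` in the root `β`: `s_β(χ) = χ − (2(χ,β)/(β,β))·β`. -/
noncomputable def sRefl {E : Type*} [NormedAddCommGroup E] [InnerProductSpace ℝ E]
    (β χ : E) : E :=
  χ - (2 * ⟪χ, β⟫ / ⟪β, β⟫) • β

/-- `Φ` is a finite root system in `E`: a finite set of nonzero vectors spanning `E` such
that for all `α, β ∈ Φ` the reflection `s_α(β)` lies in `Φ`. -/
def IsRootSystem {E : Type*} [NormedAddCommGroup E] [InnerProductSpace ℝ E]
    (Φ : Finset E) : Prop :=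
  (∀ β ∈ Φ, β ≠ 0) ∧ Submodule.span ℝ (Φ : Set E) = ⊤ ∧
    ∀ α ∈ Φ, ∀ β ∈ Φ, sRefl α β ∈ Φ

/-- `Φ` is irreducible: it cannot be written as the disjoint union of two nonempty mutually
orthogonal subsets. -/
def IsIrreducibleRootSystem {E : Type*} [NormedAddCommGroup E] [InnerProductSpace ℝ E]
    (Φ : Finset E) : Prop :=
  IsRootSystem Φ ∧
    ¬∃ Φ₁ Φ₂ : Finset E, Φ₁.Nonempty ∧ Φ₂.Nonempty ∧ Disjoint Φ₁ Φ₂ ∧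
      (∀ a ∈ Φ₁, ∀ b ∈ Φ₂, ⟪a, b⟫ = 0) ∧ (Φ : Set E) = ↑Φ₁ ∪ ↑Φ₂

section Aux
variable {E : Type*} [NormedAddCommGroup E] [InnerProductSpace ℝ E]
noncomputable def sReflL (β : E) : E →ₗ[ℝ] E where
  toFun x := sRefl β x
  map_add' x y := by
    simp only [sRefl, inner_add_left]; match_scalars <;> ring
  map_smul' r x := by
    simp only [sRefl, real_inner_smul_left, RingHom.id_apply]; match_scalars <;> ring
@[simp] lemma sReflL_apply (β x : E) : sReflL β x = sRefl β x := rfl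
lemma inner_sRefl_sRefl {β : E} (hβ : β ≠ 0) (x y : E) :
    ⟪sRefl β x, sRefl β y⟫ = ⟪x, y⟫ := by
  have hb : ⟪β, β⟫ ≠ 0 := (inner_self_ne_zero (𝕜 := ℝ)).mpr hβ
  simp only [sRefl, inner_sub_left, inner_sub_right, real_inner_smul_left,
    real_inner_smul_right]
  field_simp; ring_nf
  rw [real_inner_comm β x, real_inner_comm β y]; ring
lemma sRefl_sRefl {β : E} (hβ : β ≠ 0) (x : E) : sRefl β (sRefl β x) = x := by
  have hb : ⟪β, β⟫ ≠ 0 := (inner_self_ne_zero (𝕜 := ℝ)).mpr hβ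
  simp only [sRefl, inner_sub_left, real_inner_smul_left]
  match_scalars
  · ring
  · field_simp; ring

/-- the linear map given by a word of reflections -/
noncomputable def wMap (l : List E) : E →ₗ[ℝ] E :=
  l.foldr (fun β g => (sReflL β).comp g) LinearMap.id

@[simp] lemma wMap_nil : wMap ([] : List E) = LinearMap.id := rfl

lemma wMap_cons (β : E) (l : List E) (v : E) : wMap (β :: l) v = sRefl β (wMap l v) := rfl

lemma wMap_apply (l : List E) (v : E) : wMap l v = l.foldr sRefl v := by
  induction l with
  | nil => rfl
  | cons β t ih => simp [wMap_cons, ih]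

lemma wMap_foldr (l : List E) (g : E →ₗ[ℝ] E) :
    l.foldr (fun β h => (sReflL β).comp h) g = (wMap l).comp g := by
  induction l with
  | nil => simp [wMap]
  | cons β t ih => simp only [List.foldr_cons, ih, wMap, LinearMap.comp_assoc]

lemma wMap_append (l₁ l₂ : List E) (v : E) :
    wMap (l₁ ++ l₂) v = wMap l₁ (wMap l₂ v) := by
  rw [wMap, List.foldr_append, wMap_foldr]; rfl

lemma wMap_reverse_cancel {l : List E} (h : ∀ β ∈ l, β ≠ 0) (v : E) :
    wMap l.reverse (wMap l v) = v := by
  induction l generalizing v with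
  | nil => rfl
  | cons β t ih =>
    have hβ : β ≠ 0 := h β (by simp)
    have ht : ∀ x ∈ t, x ≠ 0 := fun x hx => h x (by simp [hx])
    rw [List.reverse_cons, wMap_cons, wMap_append]
    have : wMap [β] (sRefl β (wMap t v)) = wMap t v := by
      rw [wMap_cons]
      simpa using sRefl_sRefl hβ (wMap t v)
    rw [this, ih ht]

lemma wMap_cancel_reverse {l : List E} (h : ∀ β ∈ l, β ≠ 0) (v : E) :
    wMap l (wMap l.reverse v) = v := by
  have := wMap_reverse_cancel (l := l.reverse) (fun β hβ => h β (List.mem_reverse.mp hβ)) v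
  rwa [List.reverse_reverse] at this

/-- the word map as a linear equivalence, given that all letters are nonzero -/
noncomputable def wEquiv (l : List E) (h : ∀ β ∈ l, β ≠ 0) : E ≃ₗ[ℝ] E :=
  LinearEquiv.ofLinear (wMap l) (wMap l.reverse)
    (LinearMap.ext fun v => wMap_cancel_reverse h v)
    (LinearMap.ext fun v => wMap_reverse_cancel h v)

@[simp] lemma wEquiv_coe (l : List E) (h : ∀ β ∈ l, β ≠ 0) :
    (wEquiv l h : E →ₗ[ℝ] E) = wMap l := rfl

lemma inner_wMap_wMap {l : List E} (h : ∀ β ∈ l, β ≠ 0) (x y : E) :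
    ⟪wMap l x, wMap l y⟫ = ⟪x, y⟫ := by
  induction l with
  | nil => rfl
  | cons β t ih =>
    rw [wMap_cons, wMap_cons, inner_sRefl_sRefl (h β (by simp)),
      ih fun x hx => h x (by simp [hx])]

lemma finrank_map_wMap {l : List E} (h : ∀ β ∈ l, β ≠ 0) (p : Submodule ℝ E) :
    Module.finrank ℝ (p.map (wMap l)) = Module.finrank ℝ p := by
  have := LinearEquiv.finrank_map_eq (wEquiv l h) p
  rwa [wEquiv_coe] at this

end Aux

section Chains
variable {α : Type*}

lemma chain_snoc {R : α → α → Prop} :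
    ∀ (l : List α) (a b : α), List.Chain R a l →
      R ((a :: l).getLast (List.cons_ne_nil _ _)) b → List.Chain R a (l ++ [b]) := by
  intro l
  induction l with
  | nil => intro a b _ hR; exact List.chain_cons.mpr ⟨by simpa using hR, List.Chain.nil⟩
  | cons c t ih =>
    intro a b hc hR
    obtain ⟨hac, hct⟩ := List.chain_cons.mp hc
    rw [List.cons_append]
    exact List.chain_cons.mpr ⟨hac, ih c b hct (by
      rwa [List.getLast_cons (List.cons_ne_nil _ _)] at hR)⟩

lemma getLast_snoc (l : List α) (a b : α) :
    ((a :: l) ++ [b]).getLast (by simp) = b := by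
  simp [List.getLast_append]

end Chains

/-- **Root-system form of Theorem 3.2 of the paper.** Let `Φ` be an irreducible finite root
system in a finite-dimensional real inner product space `E`, with Weyl group `W(Φ)` (whose
elements are exactly the finite products `s_{β₁} ∘ ⋯ ∘ s_{β_m}` of reflections in roots,
since each reflection is its own inverse). Let `X` and `𝔞` be linear subspaces of `E` with
`dim 𝔞 ≤ dim X`. Then there is `w ∈ W(Φ)` with `w(𝔞) ∩ X^⊥ = {0}`. -/
theorem exists_weyl_conjugate_meeting_orthogonal_trivially
    {E : Type*} [NormedAddCommGroup E] [InnerProductSpace ℝ E] [FiniteDimensional ℝ E]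
    (Φ : Finset E) (hΦ : IsIrreducibleRootSystem Φ)
    (X 𝔞 : Submodule ℝ E) (h : Module.finrank ℝ 𝔞 ≤ Module.finrank ℝ X) :
    ∃ l : List E, (∀ β ∈ l, β ∈ Φ) ∧
      ((fun v => l.foldr sRefl v) '' (𝔞 : Set E)) ∩ (Xᗮ : Set E) = {0} := by
  classical
  obtain ⟨⟨hne, hspan, hclosed⟩, hirr⟩ := hΦ
  set B := Xᗮ with hB
  set D : Set ℕ := {k | ∃ l : List E, (∀ β ∈ l, β ∈ Φ) ∧
      Module.finrank ℝ ↥(𝔞.map (wMap l) ⊓ B) = k} with hD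
  have hDne : D.Nonempty :=
    ⟨Module.finrank ℝ ↥(𝔞 ⊓ B), [], by simp, by rw [wMap_nil, Submodule.map_id]⟩
  obtain ⟨l₀, hl₀Φ, hl₀d⟩ := Nat.sInf_mem hDne
  set d := sInf D with hd
  have hmin : ∀ (l : List E), (∀ β ∈ l, β ∈ Φ) →
      d ≤ Module.finrank ℝ ↥(𝔞.map (wMap l) ⊓ B) :=
    fun l hl => Nat.sInf_le ⟨l, hl, rfl⟩
  have hl₀ne : ∀ β ∈ l₀, β ≠ 0 := fun β hβ => hne β (hl₀Φ β hβ)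
  refine ⟨l₀, hl₀Φ, ?_⟩
  set A₀ := 𝔞.map (wMap l₀) with hA₀
  have himg : (fun v => l₀.foldr sRefl v) '' (𝔞 : Set E) = ↑A₀ := by
    rw [hA₀, Submodule.map_coe]
    exact Set.image_congr fun x _ => (wMap_apply l₀ x).symm
  rw [himg]
  suffices hbot : A₀ ⊓ B = ⊥ by
    rw [← Submodule.coe_inf, hbot, Submodule.bot_coe]
  rcases Nat.eq_zero_or_pos d with hd0 | hdpos
  · exact Submodule.finrank_eq_zero.mp (hl₀d.trans hd0)
  exfalso
  set Z := A₀ ⊓ B with hZ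
  have hZrank : Module.finrank ℝ Z = d := hl₀d
  have hZne : Z ≠ ⊥ := by
    intro hb
    rw [hb, finrank_bot] at hZrank
    omega
  obtain ⟨z, hzZ, hz0⟩ := (Submodule.ne_bot_iff Z).mp hZne
  set S₀ := A₀ ⊔ B with hS₀
  have hrank_eq := Submodule.finrank_sup_add_finrank_inf_eq A₀ B
  have hA₀rank : Module.finrank ℝ A₀ = Module.finrank ℝ 𝔞 := finrank_map_wMap hl₀ne 𝔞
  have hBrank := Submodule.finrank_add_finrank_orthogonal X
  have hS₀rank : Module.finrank ℝ S₀ < Module.finrank ℝ E := by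
    rw [← hZ, ← hS₀] at hrank_eq
    have hBX : Module.finrank ℝ ↥B = Module.finrank ℝ ↥Xᗮ := rfl
    omega
  -- a root outside S₀
  obtain ⟨β₀, hβ₀Φ, hβ₀S⟩ : ∃ β ∈ Φ, β ∉ S₀ := by
    by_contra hc
    push_neg at hc
    have hle : Submodule.span ℝ (Φ : Set E) ≤ S₀ :=
      Submodule.span_le.mpr fun x hx => hc x hx
    rw [hspan, top_le_iff] at hle
    rw [hle, finrank_top] at hS₀rank
    omega
  -- a root non-orthogonal to z
  obtain ⟨γ₀, hγ₀Φ, hγ₀z⟩ : ∃ γ ∈ Φ, ⟪γ, z⟫ ≠ 0 := by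
    by_contra hc
    push_neg at hc
    have key : ∀ x ∈ Submodule.span ℝ (Φ : Set E), ⟪x, z⟫ = 0 := by
      intro x hx
      induction hx using Submodule.span_induction with
      | mem a ha => exact hc a ha
      | zero => simp
      | add a b _ _ ha hb => rw [inner_add_left, ha, hb, add_zero]
      | smul r a _ ha => rw [real_inner_smul_left, ha, mul_zero]
    have hzz : ⟪z, z⟫ = 0 := key z (by rw [hspan]; trivial)
    exact hz0 (inner_self_eq_zero.mp hzz)
  -- Lemma M : roots outside S₀ are orthogonal to Z
  have hM : ∀ β ∈ Φ, β ∉ S₀ → ∀ x ∈ Z, ⟪x, β⟫ = 0 := by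
    intro β hβΦ hβS
    have hβ0 : β ≠ 0 := hne β hβΦ
    have hbb : ⟪β, β⟫ ≠ 0 := (inner_self_ne_zero (𝕜 := ℝ)).mpr hβ0
    have hKmap : 𝔞.map (wMap (β :: l₀)) = A₀.map (sReflL β) := by
      rw [hA₀, ← Submodule.map_comp]; rfl
    have hKsub : ∀ x ∈ (𝔞.map (wMap (β :: l₀))) ⊓ B, x ∈ Z ∧ ⟪x, β⟫ = 0 := by
      intro x hx
      obtain ⟨hx1, hxB⟩ := hx
      rw [hKmap] at hx1
      obtain ⟨a, haA₀, rfl⟩ := hx1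
      have hform : sReflL β a = a - (2 * ⟪a, β⟫ / ⟪β, β⟫) • β := rfl
      have hc0 : (2 * ⟪a, β⟫ / ⟪β, β⟫) = 0 := by
        by_contra hcne
        apply hβS
        have h1 : (2 * ⟪a, β⟫ / ⟪β, β⟫) • β ∈ S₀ := by
          have : (2 * ⟪a, β⟫ / ⟪β, β⟫) • β = a - sReflL β a := by rw [hform]; abel
          rw [this]
          exact Submodule.sub_mem _ (Submodule.mem_sup_left haA₀)
            (Submodule.mem_sup_right hxB)
        have h2 := Submodule.smul_mem S₀ (2 * ⟪a, β⟫ / ⟪β, β⟫)⁻¹ h1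
        rwa [smul_smul, inv_mul_cancel₀ hcne, one_smul] at h2
      have hinner : ⟪a, β⟫ = 0 := by
        rcases div_eq_zero_iff.mp hc0 with h' | h'
        · linarith
        · exact absurd h' hbb
      have hxa : sReflL β a = a := by rw [hform, hc0, zero_smul, sub_zero]
      rw [hxa] at hxB ⊢
      exact ⟨⟨haA₀, hxB⟩, hinner⟩
    have hdK : d ≤ Module.finrank ℝ ↥(𝔞.map (wMap (β :: l₀)) ⊓ B) := by
      apply hmin
      intro x hx
      rcases List.mem_cons.mp hx with h' | h'
      · exact h' ▸ hβΦ
      · exact hl₀Φ x h'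
    have hKZ : (𝔞.map (wMap (β :: l₀))) ⊓ B = Z :=
      Submodule.eq_of_le_of_finrank_le (fun x hx => (hKsub x hx).1) (by omega)
    intro x hxZ
    exact (hKsub x (hKZ ▸ hxZ)).2
  -- propagation along chains of non-orthogonal roots
  set adj : E → E → Prop := fun a b => a ∈ Φ ∧ b ∈ Φ ∧ ⟪a, b⟫ ≠ 0 with hadj
  have prop : ∀ (k : ℕ) (rest : List E), rest.length ≤ k → ∀ δ, δ ∈ Φ → δ ∉ S₀ →
      List.Chain adj δ rest → ⟪(δ :: rest).getLast (List.cons_ne_nil _ _), z⟫ = 0 := by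
    intro k
    induction k with
    | zero =>
      intro rest hlen δ hδΦ hδS _
      have hrest : rest = [] := List.length_eq_zero_iff.mp (Nat.le_zero.mp hlen)
      subst hrest
      have := hM δ hδΦ hδS z hzZ
      rw [real_inner_comm] at this
      simpa using this
    | succ k ih =>
      intro rest hlen δ hδΦ hδS hchain
      match rest with
      | [] =>
        have := hM δ hδΦ hδS z hzZ
        rw [real_inner_comm] at this
        simpa using this
      | δ₁ :: rest' =>
        obtain ⟨⟨_, hδ₁Φ, hδδ₁⟩, hchain'⟩ := List.chain_cons.mp hchain
        rw [List.getLast_cons (List.cons_ne_nil _ _)]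
        have hlen' : rest'.length ≤ k := by
          simpa using Nat.succ_le_succ_iff.mp (by simpa using hlen)
        by_cases hδ₁S : δ₁ ∈ S₀
        · have hδ0 : δ ≠ 0 := hne δ hδΦ
          have hbb : ⟪δ, δ⟫ ≠ 0 := (inner_self_ne_zero (𝕜 := ℝ)).mpr hδ0
          have hδz : ⟪δ, z⟫ = 0 := by
            rw [real_inner_comm]; exact hM δ hδΦ hδS z hzZ
          have hδ₁'Φ : sRefl δ δ₁ ∈ Φ := hclosed δ hδΦ δ₁ hδ₁Φ
          have hc : (2 * ⟪δ₁, δ⟫ / ⟪δ, δ⟫) ≠ 0 := by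
            apply div_ne_zero _ hbb
            exact mul_ne_zero two_ne_zero (by rwa [real_inner_comm])
          have hδ₁'S : sRefl δ δ₁ ∉ S₀ := by
            intro hmem
            apply hδS
            have h1 : (2 * ⟪δ₁, δ⟫ / ⟪δ, δ⟫) • δ ∈ S₀ := by
              have he : (2 * ⟪δ₁, δ⟫ / ⟪δ, δ⟫) • δ = δ₁ - sRefl δ δ₁ := by
                rw [sRefl]; abel
              rw [he]
              exact Submodule.sub_mem _ hδ₁S hmem
            have h2 := Submodule.smul_mem S₀ (2 * ⟪δ₁, δ⟫ / ⟪δ, δ⟫)⁻¹ h1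
            rwa [smul_smul, inv_mul_cancel₀ hc, one_smul] at h2
          have hchain'' : List.Chain adj (sRefl δ δ₁) (rest'.map (sRefl δ)) := by
            apply (List.isChain_map (sRefl δ) (l := δ₁ :: rest')).mpr
            refine hchain'.imp fun a b hab => ?_
            exact ⟨hclosed δ hδΦ a hab.1, hclosed δ hδΦ b hab.2.1,
              by rw [inner_sRefl_sRefl hδ0]; exact hab.2.2⟩
          have ihres := ih (rest'.map (sRefl δ)) (by simpa using hlen')
            (sRefl δ δ₁) hδ₁'Φ hδ₁'S hchain''
          have hcongr : (sRefl δ δ₁ :: rest'.map (sRefl δ)).getLast (List.cons_ne_nil _ _)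
              = sRefl δ ((δ₁ :: rest').getLast (List.cons_ne_nil _ _)) := by
            exact List.getLast_map (f := sRefl δ) (l := δ₁ :: rest') (by simp)
          rw [hcongr] at ihres
          set g := (δ₁ :: rest').getLast (List.cons_ne_nil _ _) with hg
          have hexp : ⟪sRefl δ g, z⟫ = ⟪g, z⟫ - (2 * ⟪g, δ⟫ / ⟪δ, δ⟫) * ⟪δ, z⟫ := by
            rw [sRefl, inner_sub_left, real_inner_smul_left]
          rw [hexp, hδz, mul_zero, sub_zero] at ihres
          exact ihres
        · exact ih rest' hlen' δ₁ hδ₁Φ hδ₁S hchain'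
  -- every root is reachable from a root outside S₀
  set reach : E → Prop := fun γ => ∃ δ rest, δ ∈ Φ ∧ δ ∉ S₀ ∧ List.Chain adj δ rest ∧
      (δ :: rest).getLast (List.cons_ne_nil _ _) = γ with hreachdef
  have hreachz : ∀ γ, reach γ → ⟪γ, z⟫ = 0 := by
    rintro γ ⟨δ, rest, hδΦ, hδS, hchain, hlast⟩
    rw [← hlast]
    exact prop rest.length rest le_rfl δ hδΦ hδS hchain
  have hall : ∀ γ ∈ Φ, reach γ := by
    by_contra hcon
    push_neg at hcon
    obtain ⟨γb, hγbΦ, hγb⟩ := hcon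
    apply hirr
    refine ⟨Φ.filter reach, Φ.filter (fun γ => ¬ reach γ), ?_, ?_, ?_, ?_, ?_⟩
    · exact ⟨β₀, Finset.mem_filter.mpr ⟨hβ₀Φ,
        ⟨β₀, [], hβ₀Φ, hβ₀S, List.Chain.nil, by simp⟩⟩⟩
    · exact ⟨γb, Finset.mem_filter.mpr ⟨hγbΦ, hγb⟩⟩
    · exact Finset.disjoint_filter_filter_not Φ Φ reach
    · intro a ha b hb
      obtain ⟨haΦ, δ, rest, hδΦ, hδS, hchain, hlast⟩ := Finset.mem_filter.mp ha
      obtain ⟨hbΦ, hnb⟩ := Finset.mem_filter.mp hb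
      by_contra hab
      apply hnb
      refine ⟨δ, rest ++ [b], hδΦ, hδS, chain_snoc rest δ b hchain ?_, ?_⟩
      · rw [hlast]; exact ⟨haΦ, hbΦ, hab⟩
      · exact getLast_snoc rest δ b
    · conv_lhs => rw [← Finset.filter_union_filter_not_eq reach Φ]
      exact Finset.coe_union _ _
  exact hγ₀z (hreachz γ₀ (hall γ₀ hγ₀Φ))
end

section
/- Let Φ be an irreducible finite root system in a finite-dimensional real inner product space E. For every nonzero t ∈ E and every nonzero χ ∈ E there exists β ∈ Φ ∪ {0} such that (s_β(χ), t) ≠ 0, where s_β for β ∈ Φ is the reflection s_β(χ) = χ − (2(χ,β)/(β,β))β and s_0 is the identity map. Equivalently: either (χ, t) ≠ 0, or there exists a root β ∈ Φ with (s_β(χ), t) ≠ 0. -/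
open scoped RealInnerProductSpace

/-- **Proposition 3.4 of the paper.** Let `Φ` be an irreducible finite root system in a
finite-dimensional real inner product space `E`. For every nonzero `t ∈ E` and nonzero
`χ ∈ E` there exists `β ∈ Φ ∪ {0}` with `(s_β(χ), t) ≠ 0`. -/
theorem exists_reflection_inner_ne_zero
    {E : Type*} [NormedAddCommGroup E] [InnerProductSpace ℝ E] [FiniteDimensional ℝ E]
    (Φ : Finset E) (hΦ : IsIrreducibleRootSystem Φ)
    (t χ : E) (ht : t ≠ 0) (hχ : χ ≠ 0) :
    ∃ β : E, (β ∈ Φ ∨ β = 0) ∧ ⟪sRefl β χ, t⟫ ≠ 0 := by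
  classical
  obtain ⟨⟨hne, hspan, hclos⟩, hirr⟩ := hΦ
  by_contra hcon
  push_neg at hcon
  have hχt : ⟪χ, t⟫ = 0 := by
    have h := hcon 0 (Or.inr rfl)
    simpa [sRefl] using h
  have hself : ∀ β ∈ Φ, ⟪β, β⟫ ≠ (0 : ℝ) := by
    intro β hβ
    simpa [inner_self_eq_zero] using hne β hβ
  have hprod : ∀ β ∈ Φ, ⟪χ, β⟫ * ⟪β, t⟫ = 0 := by
    intro β hβ
    have h := hcon β (Or.inl hβ)
    rw [sRefl, inner_sub_left, real_inner_smul_left, hχt] at h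
    have hbb := hself β hβ
    have h2 : 2 * ⟪χ, β⟫ / ⟪β, β⟫ * ⟪β, t⟫ = 0 := by linarith
    have h3 : ⟪χ, β⟫ * ⟪β, t⟫ * (2 / ⟪β, β⟫) = 0 := by rw [← h2]; ring
    rcases mul_eq_zero.mp h3 with h4 | h4
    · exact h4
    · exact absurd h4 (div_ne_zero two_ne_zero hbb)
  have horth : ∀ δ ∈ Φ, ⟪χ, δ⟫ ≠ 0 → ⟪δ, t⟫ = 0 := by
    intro δ hδ hχδ
    rcases mul_eq_zero.mp (hprod δ hδ) with h | h
    · exact absurd h hχδ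
    · exact h
  have horth' : ∀ δ ∈ Φ, ⟪δ, t⟫ ≠ 0 → ⟪χ, δ⟫ = 0 := by
    intro δ hδ hδt
    rcases mul_eq_zero.mp (hprod δ hδ) with h | h
    · exact h
    · exact absurd h hδt
  -- the key edge lemma: a root non-orthogonal to χ is orthogonal to any root non-orthogonal to t
  have hedge : ∀ α ∈ Φ, ∀ β ∈ Φ, ⟪χ, α⟫ ≠ 0 → ⟪β, t⟫ ≠ 0 → ⟪α, β⟫ = 0 := by
    intro α hα β hβ hχα hβt
    by_contra hab
    have hβα : ⟪β, α⟫ ≠ 0 := fun h => hab (by rwa [real_inner_comm])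
    have hc : 2 * ⟪β, α⟫ / ⟪α, α⟫ ≠ 0 :=
      div_ne_zero (by simpa using hβα) (hself α hα)
    have hγΦ : sRefl α β ∈ Φ := hclos α hα β hβ
    have h1 : ⟪χ, sRefl α β⟫ ≠ 0 := by
      rw [sRefl, inner_sub_right, real_inner_smul_right, horth' β hβ hβt, zero_sub, neg_ne_zero]
      exact mul_ne_zero hc hχα
    have h2 : ⟪sRefl α β, t⟫ ≠ 0 := by
      rw [sRefl, inner_sub_left, real_inner_smul_left, horth α hα hχα, mul_zero, sub_zero]
      exact hβt
    exact mul_ne_zero h1 h2 (hprod (sRefl α β) hγΦ)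
  -- adjacency relation on Φ
  set r : E → E → Prop := fun a b => b ∈ Φ ∧ ⟪a, b⟫ ≠ 0 with hr
  -- key chain lemma: any root linked by a chain to a root non-orthogonal to χ is orthogonal to t
  have key : ∀ (l : List E) (δ : E), δ ∈ Φ → ⟪χ, δ⟫ ≠ 0 → List.Chain r δ l →
      ⟪(δ :: l).getLast (List.cons_ne_nil _ _), t⟫ = 0 := by
    intro l
    induction l with
    | nil =>
      intro δ hδ hχδ _
      simpa using horth δ hδ hχδ
    | cons γ₁ rest ih =>
      intro δ hδ hχδ hch
      obtain ⟨⟨hγ₁Φ, hδγ₁⟩, hch'⟩ := List.chain_cons.mp hch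
      rw [List.getLast_cons_cons]
      by_cases hχγ₁ : ⟪χ, γ₁⟫ ≠ 0
      · exact ih γ₁ hγ₁Φ hχγ₁ hch'
      · push_neg at hχγ₁
        have hγ₁t : ⟪γ₁, t⟫ = 0 := by
          by_contra h
          exact hδγ₁ (hedge δ hδ γ₁ hγ₁Φ hχδ h)
        cases rest with
        | nil => simpa using hγ₁t
        | cons γ₂ rest₂ =>
          obtain ⟨⟨hγ₂Φ, hγ₁γ₂⟩, hch₂⟩ := List.chain_cons.mp hch'
          rw [List.getLast_cons_cons]
          by_cases hδγ₂ : ⟪δ, γ₂⟫ ≠ 0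
          · have h := ih δ hδ hχδ (List.chain_cons.mpr ⟨⟨hγ₂Φ, hδγ₂⟩, hch₂⟩)
            rwa [List.getLast_cons_cons] at h
          · push_neg at hδγ₂
            set δ' := sRefl δ γ₁ with hδ'
            have hδ'Φ : δ' ∈ Φ := hclos δ hδ γ₁ hγ₁Φ
            have hγ₁δ : ⟪γ₁, δ⟫ ≠ 0 := fun h => hδγ₁ (by rwa [real_inner_comm])
            have hc : 2 * ⟪γ₁, δ⟫ / ⟪δ, δ⟫ ≠ 0 :=
              div_ne_zero (by simpa using hγ₁δ) (hself δ hδ)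
            have hχδ' : ⟪χ, δ'⟫ ≠ 0 := by
              rw [hδ', sRefl, inner_sub_right, real_inner_smul_right, hχγ₁, zero_sub, neg_ne_zero]
              exact mul_ne_zero hc hχδ
            have hδ'γ₂ : ⟪δ', γ₂⟫ ≠ 0 := by
              rw [hδ', sRefl, inner_sub_left, real_inner_smul_left, hδγ₂, mul_zero, sub_zero]
              exact hγ₁γ₂
            have h := ih δ' hδ'Φ hχδ' (List.chain_cons.mpr ⟨⟨hγ₂Φ, hδ'γ₂⟩, hch₂⟩)
            rwa [List.getLast_cons_cons] at h
  -- reachability from roots non-orthogonal to χ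
  set Reach : E → Prop := fun γ => ∃ δ ∈ Φ, ⟪χ, δ⟫ ≠ 0 ∧ Relation.ReflTransGen r δ γ with hReach
  have hreach_t : ∀ γ, Reach γ → ⟪γ, t⟫ = 0 := by
    rintro γ ⟨δ, hδ, hχδ, hrt⟩
    obtain ⟨l, hch, hlast⟩ := List.exists_isChain_cons_of_relationReflTransGen hrt
    rw [← hlast]
    exact key l δ hδ hχδ hch
  -- nonzero pairings exist since Φ spans E
  have hex : ∀ v : E, v ≠ 0 → ∃ β ∈ Φ, ⟪v, β⟫ ≠ 0 := by
    intro v hv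
    by_contra h
    push_neg at h
    have hall : ∀ w ∈ Submodule.span ℝ (Φ : Set E), ⟪v, w⟫ = 0 := by
      intro w hw
      induction hw using Submodule.span_induction with
      | mem x hx => exact h x hx
      | zero => simp
      | add x y _ _ hx hy => rw [inner_add_right, hx, hy, add_zero]
      | smul c x _ hx => rw [real_inner_smul_right, hx, mul_zero]
    have : ⟪v, v⟫ = (0 : ℝ) := hall v (by rw [hspan]; trivial)
    exact hv (inner_self_eq_zero.mp this)
  obtain ⟨α₀, hα₀Φ, hχα₀⟩ := hex χ hχ
  obtain ⟨β₀, hβ₀Φ, hβ₀t'⟩ := hex t ht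
  have hβ₀t : ⟪β₀, t⟫ ≠ 0 := fun h => hβ₀t' (by rwa [real_inner_comm])
  -- build the orthogonal decomposition
  apply hirr
  refine ⟨Φ.filter (fun γ => Reach γ), Φ.filter (fun γ => ¬ Reach γ), ?_, ?_, ?_, ?_, ?_⟩
  · exact ⟨α₀, Finset.mem_filter.mpr ⟨hα₀Φ, ⟨α₀, hα₀Φ, hχα₀, Relation.ReflTransGen.refl⟩⟩⟩
  · refine ⟨β₀, Finset.mem_filter.mpr ⟨hβ₀Φ, fun hR => hβ₀t (hreach_t β₀ hR)⟩⟩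
  · exact Finset.disjoint_filter_filter_not Φ Φ _
  · intro a ha b hb
    obtain ⟨haΦ, haR⟩ := Finset.mem_filter.mp ha
    obtain ⟨hbΦ, hbR⟩ := Finset.mem_filter.mp hb
    by_contra hab
    obtain ⟨δ, hδ, hχδ, hrt⟩ := haR
    exact hbR ⟨δ, hδ, hχδ, hrt.tail ⟨hbΦ, hab⟩⟩
  · ext x
    simp only [Set.mem_union, Finset.mem_coe, Finset.mem_filter]
    constructor
    · intro hx
      by_cases hR : Reach x
      · exact Or.inl ⟨hx, hR⟩
      · exact Or.inr ⟨hx, hR⟩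
    · rintro (⟨hx, -⟩ | ⟨hx, -⟩) <;> exact hx
end

section
/- Let n ≥ 2, G = SL(n,ℝ), Γ = SL(n,ℤ), and let X = G/Γ carry the quotient topology, with G acting on X by left translations. Let 𝔞 be a nonzero linear subspace of the space of real diagonal n×n matrices of trace zero, and let A = exp(𝔞) ⊆ G. Then there exists x ∈ X such that the trajectory Ax is divergent, i.e., the orbit map A → X, a ↦ a·x, is proper: for every compact K ⊆ X the set {a ∈ A : a·x ∈ K} is compact. (This is the instance of the paper's Theorem 1.2 for the ℚ-simple group SL_n, where the ℚ-rank is n−1 and automatically dim A ≤ n−1.) -/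
/-!
The base point `Γ` already has a divergent trajectory under the whole group of positive diagonal
matrices `a = diag(e^{d₁}, …, e^{dₙ})`. If `a Γ = c Γ` with `c` in a compact set on which the
entries of `c⁻¹` are bounded by `E`, then `c⁻¹ a` is an integer matrix of determinant one, so its
`j`-th column `e^{d_j} • (c⁻¹)_{· j}` has an entry of absolute value at least `1`, whence
`d_j ≥ -log E`. As `∑ d_j = 0`, this bounds every `|d_j|` by `n log E`. Since compact subsets of
`SL(n,ℝ)/SL(n,ℤ)` lift to compact subsets of `SL(n,ℝ)`, the `a` with `a Γ` in a given compact set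
have bounded exponents and form a compact set.
-/

open Matrix

noncomputable instance SLtop (n : ℕ) : TopologicalSpace (SpecialLinearGroup (Fin n) ℝ) :=
  TopologicalSpace.induced (fun A => (A : Matrix (Fin n) (Fin n) ℝ)) inferInstance

theorem IsOpenMap.exists_isCompact_subset_image {X Y : Type*} [TopologicalSpace X]
    [TopologicalSpace Y] [WeaklyLocallyCompactSpace X] {f : X → Y} (hf : IsOpenMap f)
    (hsurj : Function.Surjective f) {K : Set Y} (hK : IsCompact K) :
    ∃ C, IsCompact C ∧ K ⊆ f '' C := by
  choose V hV hVx using fun x : X => exists_compact_mem_nhds x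
  obtain ⟨t, ht⟩ := hK.elim_finite_subcover (fun x => f '' interior (V x))
    (fun x => hf _ isOpen_interior) fun y _ => by
      obtain ⟨x, rfl⟩ := hsurj y
      exact Set.mem_iUnion.2 ⟨x, Set.mem_image_of_mem f (mem_interior_iff_mem_nhds.2 (hVx x))⟩
  refine ⟨⋃ x ∈ t, V x, t.isCompact_biUnion fun x _ => hV x, ht.trans ?_⟩
  rw [Set.image_iUnion₂]
  exact Set.iUnion₂_mono fun x _ => Set.image_mono interior_subset

theorem abs_le_card_mul_of_sum_eq_zero {ι : Type*} [Fintype ι] {d : ι → ℝ}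
    (hd : ∑ i, d i = 0) {L : ℝ} (hL : ∀ i, -L ≤ d i) (j : ι) :
    |d j| ≤ Fintype.card ι * L := by
  have hup : d j + L ≤ Fintype.card ι * L :=
    calc d j + L ≤ ∑ i, (d i + L) :=
        Finset.single_le_sum (f := fun i => d i + L) (fun i _ => by linarith [hL i])
          (Finset.mem_univ j)
      _ = Fintype.card ι * L := by
        rw [Finset.sum_add_distrib, hd, Finset.sum_const, Finset.card_univ, nsmul_eq_mul, zero_add]
  have hcard : (1 : ℝ) ≤ Fintype.card ι := Nat.one_le_cast.2 (Fintype.card_pos_iff.2 ⟨j⟩)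
  rw [abs_le]
  constructor <;> nlinarith [hL j]

namespace Matrix

variable {ι : Type*} [Fintype ι] [DecidableEq ι]

theorem exists_abs_le_of_isCompact {m n : Type*} [Fintype m] [Fintype n]
    {C : Set (Matrix m n ℝ)} (hC : IsCompact C) : ∃ E, ∀ c ∈ C, ∀ i j, |c i j| ≤ E := by
  obtain ⟨E, hE⟩ := hC.exists_bound_of_continuousOn
    (f := ⇑(of.symm : Matrix m n ℝ ≃ (m → n → ℝ))) continuous_id.continuousOn
  exact ⟨E, fun c hc i j =>
    (norm_le_pi_norm (c i) j).trans <| (norm_le_pi_norm c i).trans (hE c hc)⟩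

theorem exists_one_le_abs_of_det_ne_zero {γ : Matrix ι ι ℝ}
    (hint : ∀ i j, γ i j ∈ Set.range ((↑) : ℤ → ℝ)) (hdet : γ.det ≠ 0) (j : ι) :
    ∃ i, 1 ≤ |γ i j| := by
  obtain ⟨i, hi⟩ : ∃ i, γ i j ≠ 0 := by
    by_contra! h
    exact hdet (det_eq_zero_of_column_eq_zero j h)
  obtain ⟨k, hk⟩ := hint i j
  refine ⟨i, ?_⟩
  rw [← hk] at hi ⊢
  exact_mod_cast Int.one_le_abs (by exact_mod_cast hi)

theorem neg_log_le_of_mul_diagonal_exp {B : Matrix ι ι ℝ} {E : ℝ} (hB : ∀ i j, |B i j| ≤ E)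
    {d : ι → ℝ}
    (hint : ∀ i j, (B * diagonal fun i => Real.exp (d i)) i j ∈ Set.range ((↑) : ℤ → ℝ))
    (hdet : (B * diagonal fun i => Real.exp (d i)).det ≠ 0) (j : ι) : -Real.log E ≤ d j := by
  obtain ⟨i, hi⟩ := exists_one_le_abs_of_det_ne_zero hint hdet j
  rw [mul_diagonal, abs_mul, Real.abs_exp] at hi
  have hexp : Real.exp (-d j) ≤ E := by
    rw [Real.exp_neg, inv_le_iff_one_le_mul₀ (Real.exp_pos _)]
    calc 1 ≤ |B i j| * Real.exp (d j) := hi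
      _ ≤ E * Real.exp (d j) := by gcongr; exact hB i j
  linarith [(Real.le_log_iff_exp_le ((Real.exp_pos _).trans_le hexp)).2 hexp]

theorem det_diagonal_exp (d : ι → ℝ) :
    (diagonal fun i => Real.exp (d i)).det = Real.exp (∑ i, d i) := by
  rw [det_diagonal, Real.exp_sum]

theorem IsDiag.exp_eq_diagonal {M : Matrix ι ι ℝ} (hM : M.IsDiag) :
    NormedSpace.exp M = diagonal fun i => Real.exp (M i i) := by
  conv_lhs => rw [← hM.diagonal_diag]
  rw [exp_diagonal, Pi.exp_def]
  simp [Real.exp_eq_exp_ℝ]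

end Matrix

theorem Submodule.isCompact_setOf_norm_diag_le {ι : Type*} [Fintype ι] [DecidableEq ι]
    {𝔞 : Submodule ℝ (Matrix ι ι ℝ)} (h𝔞 : ∀ M ∈ 𝔞, M.IsDiag) (R : ℝ) :
    IsCompact {M : 𝔞 | ‖(M : Matrix ι ι ℝ).diag‖ ≤ R} := by
  have hset : {M : 𝔞 | ‖(M : Matrix ι ι ℝ).diag‖ ≤ R} =
      Subtype.val ⁻¹' (diagonal '' Metric.closedBall 0 R) := by
    ext M
    refine ⟨fun hM => ⟨_, mem_closedBall_zero_iff.2 hM, (h𝔞 M M.2).diagonal_diag⟩, ?_⟩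
    rintro ⟨d, hd, hdM⟩
    rw [Set.mem_ofPred_eq, ← hdM, diag_diagonal]
    exact mem_closedBall_zero_iff.1 hd
  rw [hset]
  exact 𝔞.closed_of_finiteDimensional.isClosedEmbedding_subtypeVal.isCompact_preimage
    ((isCompact_closedBall _ _).image continuous_id.matrix_diagonal)

namespace Matrix.SpecialLinearGroup

variable {ι : Type*} [Fintype ι] [DecidableEq ι]

instance : LocallyCompactSpace (SpecialLinearGroup ι ℝ) :=
  have : LocallyCompactSpace (Matrix ι ι ℝ) := inferInstanceAs (LocallyCompactSpace (ι → ι → ℝ))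
  isClosedEmbedding_val.locallyCompactSpace

instance isClosed_range_map_intCast :
    IsClosed (((map (Int.castRingHom ℝ)).range : Subgroup (SpecialLinearGroup ι ℝ)) :
      Set (SpecialLinearGroup ι ℝ)) := by
  rw [MonoidHom.coe_range]
  exact Real.isClosedEmbedding_intCast.specialLinearGroup_map.isClosed_range

theorem coe_apply_mem_range_intCast {g : SpecialLinearGroup ι ℝ}
    (hg : g ∈ (map (Int.castRingHom ℝ)).range) (i j : ι) :
    (g : Matrix ι ι ℝ) i j ∈ Set.range ((↑) : ℤ → ℝ) := by
  obtain ⟨γ, rfl⟩ := hg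
  exact ⟨γ i j, rfl⟩

theorem exists_norm_le_of_diagonal_exp {C : Set (SpecialLinearGroup ι ℝ)} (hC : IsCompact C) :
    ∃ R, ∀ c ∈ C, ∀ (g : SpecialLinearGroup ι ℝ) (d : ι → ℝ),
      (g : Matrix ι ι ℝ) = diagonal (fun i => Real.exp (d i)) →
      c⁻¹ * g ∈ (map (Int.castRingHom ℝ)).range → ‖d‖ ≤ R := by
  obtain ⟨E, hE⟩ := exists_abs_le_of_isCompact <|
    hC.image (f := fun c => ((c⁻¹ : SpecialLinearGroup ι ℝ) : Matrix ι ι ℝ))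
      (continuous_subtype_val.comp continuous_inv)
  have hlogE : 0 ≤ Real.log (max E 1) := Real.log_nonneg (le_max_right _ _)
  refine ⟨Fintype.card ι * Real.log (max E 1), fun c hc g d hg hcg => ?_⟩
  have hsum : ∑ i, d i = 0 := by
    rw [← Real.exp_eq_one_iff, ← det_diagonal_exp, ← hg, det_coe]
  have hB (i j : ι) : |((c⁻¹ : SpecialLinearGroup ι ℝ) : Matrix ι ι ℝ) i j| ≤ max E 1 :=
    (hE _ ⟨c, hc, rfl⟩ i j).trans (le_max_left _ _)
  have hγ : ((c⁻¹ * g : SpecialLinearGroup ι ℝ) : Matrix ι ι ℝ) =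
      ((c⁻¹ : SpecialLinearGroup ι ℝ) : Matrix ι ι ℝ) * diagonal fun i => Real.exp (d i) := by
    rw [coe_mul, hg]
  have hlow (j : ι) : -Real.log (max E 1) ≤ d j :=
    neg_log_le_of_mul_diagonal_exp hB (hγ ▸ coe_apply_mem_range_intCast hcg)
      (by rw [← hγ, det_coe]; exact one_ne_zero) j
  refine (pi_norm_le_iff_of_nonneg (mul_nonneg (Nat.cast_nonneg _) hlogE)).2 fun j => ?_
  rw [Real.norm_eq_abs]
  exact abs_le_card_mul_of_sum_eq_zero hsum hlow j

theorem isCompact_setOf_exp_mem_and_mk_mem {𝔞 : Submodule ℝ (Matrix ι ι ℝ)}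
    (h𝔞diag : ∀ M ∈ 𝔞, M.IsDiag) (h𝔞tr : ∀ M ∈ 𝔞, M.trace = 0)
    {K : Set (SpecialLinearGroup ι ℝ ⧸ (map (Int.castRingHom ℝ)).range)} (hK : IsCompact K) :
    IsCompact {a : SpecialLinearGroup ι ℝ |
      (∃ M ∈ 𝔞, (a : Matrix ι ι ℝ) = NormedSpace.exp M) ∧ (a : _ ⧸ _) ∈ K} := by
  obtain ⟨C, hC, hKC⟩ :=
    QuotientGroup.isOpenMap_coe.exists_isCompact_subset_image QuotientGroup.mk_surjective hK
  obtain ⟨R, hR⟩ := exists_norm_le_of_diagonal_exp hC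
  have hdet (M : 𝔞) : (diagonal fun i => Real.exp ((M : Matrix ι ι ℝ) i i)).det = 1 := by
    rw [det_diagonal_exp, Real.exp_eq_one_iff]
    exact h𝔞tr M M.2
  let F (M : 𝔞) : SpecialLinearGroup ι ℝ :=
    ⟨diagonal fun i => Real.exp ((M : Matrix ι ι ℝ) i i), hdet M⟩
  have hF : Continuous F := Continuous.subtype_mk
    (continuous_pi fun i => (continuous_subtype_val.matrix_elem i i).rexp).matrix_diagonal _
  have hS : IsCompact {M : 𝔞 | (F M : _ ⧸ _) ∈ K} := by
    refine (𝔞.isCompact_setOf_norm_diag_le h𝔞diag R).of_isClosed_subset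
      (hK.isClosed.preimage (continuous_quot_mk.comp hF)) fun M hM => ?_
    obtain ⟨c, hc, hcM⟩ := hKC hM
    exact hR c hc (F M) _ rfl (QuotientGroup.eq.1 hcM)
  convert hS.image hF using 1
  ext a
  constructor
  · rintro ⟨⟨M, hM, ha⟩, haK⟩
    have hFa : F ⟨M, hM⟩ = a := Subtype.ext (ha.trans (h𝔞diag M hM).exp_eq_diagonal).symm
    exact ⟨⟨M, hM⟩, by rwa [Set.mem_ofPred_eq, hFa], hFa⟩
  · rintro ⟨M, hM, rfl⟩
    exact ⟨⟨M, M.2, (h𝔞diag M M.2).exp_eq_diagonal.symm⟩, hM⟩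

end Matrix.SpecialLinearGroup

theorem exists_divergent_trajectory_SL_general
    (n : ℕ)
    (Γ : Subgroup (SpecialLinearGroup (Fin n) ℝ))
    (hΓ : Γ = (SpecialLinearGroup.map (n := Fin n) (Int.castRingHom ℝ)).range)
    (𝔞 : Submodule ℝ (Matrix (Fin n) (Fin n) ℝ))
    (h𝔞diag : ∀ M ∈ 𝔞, M.IsDiag)
    (h𝔞tr : ∀ M ∈ 𝔞, M.trace = 0)
    (A : Set (SpecialLinearGroup (Fin n) ℝ))
    (hA : A = {a : SpecialLinearGroup (Fin n) ℝ | ∃ M ∈ 𝔞, (↑a : Matrix (Fin n) (Fin n) ℝ) = NormedSpace.exp M}) :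
    ∃ x : SpecialLinearGroup (Fin n) ℝ ⧸ Γ,
      ∀ K : Set (SpecialLinearGroup (Fin n) ℝ ⧸ Γ), IsCompact K →
        IsCompact {a : SpecialLinearGroup (Fin n) ℝ | a ∈ A ∧ a • x ∈ K} := by
  subst hΓ hA
  refine ⟨(1 : SpecialLinearGroup (Fin n) ℝ), fun K hK => ?_⟩
  simp only [MulAction.Quotient.smul_mk, smul_eq_mul, mul_one, Set.mem_ofPred_eq]
  exact SpecialLinearGroup.isCompact_setOf_exp_mem_and_mk_mem h𝔞diag h𝔞tr hK

/-- **Existence of divergent trajectories for diagonal subgroups of `SL(n,ℝ)` acting on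
`SL(n,ℝ)/SL(n,ℤ)`** (instance of Theorem 1.2 of the paper for the `ℚ`-simple group `SL_n`).
Let `n ≥ 2`, `G = SL(n,ℝ)`, `Γ = SL(n,ℤ)` (embedded in `G`), and let `X = G/Γ` with the
quotient topology and the left-translation action of `G`. Let `𝔞` be a nonzero linear subspace
of the diagonal trace-zero real `n × n` matrices and `A = exp 𝔞 ⊆ G`. Then there is an `x ∈ X`
whose `A`-trajectory is divergent: for every compact `K ⊆ X` the set
`{a ∈ A : a • x ∈ K}` is compact. -/
theorem exists_divergent_trajectory_SL
    (n : ℕ) (hn : 2 ≤ n)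
    (Γ : Subgroup (SpecialLinearGroup (Fin n) ℝ))
    (hΓ : Γ = (SpecialLinearGroup.map (n := Fin n) (Int.castRingHom ℝ)).range)
    (𝔞 : Submodule ℝ (Matrix (Fin n) (Fin n) ℝ))
    (h𝔞ne : 𝔞 ≠ ⊥)
    (h𝔞diag : ∀ M ∈ 𝔞, M.IsDiag)
    (h𝔞tr : ∀ M ∈ 𝔞, M.trace = 0)
    (A : Set (SpecialLinearGroup (Fin n) ℝ))
    (hA : A = {a : SpecialLinearGroup (Fin n) ℝ | ∃ M ∈ 𝔞, (↑a : Matrix (Fin n) (Fin n) ℝ) = NormedSpace.exp M}) :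
    ∃ x : SpecialLinearGroup (Fin n) ℝ ⧸ Γ,
      ∀ K : Set (SpecialLinearGroup (Fin n) ℝ ⧸ Γ), IsCompact K →
        IsCompact {a : SpecialLinearGroup (Fin n) ℝ | a ∈ A ∧ a • x ∈ K} :=
  exists_divergent_trajectory_SL_general n Γ hΓ 𝔞 h𝔞diag h𝔞tr A hA
end

section
/- Let Φ be a finite root system in a finite-dimensional real inner product space E with a fixed simple system Δ = {α₁,…,α_r}, and let i ≠ j be indices in {1,…,r}. Then the simple reflection s_{α_j} (given by s_{α_j}(β) = β − (2(β,α_j)/(α_j,α_j))α_j) maps the set {β ∈ Φ : β ≥ α_i} bijectively onto itself, where β ≥ α_i means that β − α_i is a nonnegative linear combination of the simple roots α₁,…,α_r. -/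
open scoped RealInnerProductSpace

/-- `α : Fin r → E` is a simple system for `Φ`: a basis of `E` consisting of roots such that
every root is a linear combination of the `α i` with coefficients all nonnegative or all
nonpositive. -/
def IsSimpleSystem {E : Type*} [NormedAddCommGroup E] [InnerProductSpace ℝ E]
    (Φ : Finset E) {r : ℕ} (α : Fin r → E) : Prop :=
  (∀ i, α i ∈ Φ) ∧ LinearIndependent ℝ α ∧ Submodule.span ℝ (Set.range α) = ⊤ ∧
    ∀ β ∈ Φ, ∃ c : Fin r → ℝ, β = ∑ i, c i • α i ∧ ((∀ i, 0 ≤ c i) ∨ (∀ i, c i ≤ 0))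

/-- `β ≥ β'` with respect to the simple system `α`: `β − β'` is a nonnegative linear
combination of the simple roots. -/
def rootGE {E : Type*} [NormedAddCommGroup E] [InnerProductSpace ℝ E]
    {r : ℕ} (α : Fin r → E) (β β' : E) : Prop :=
  ∃ c : Fin r → ℝ, (∀ i, 0 ≤ c i) ∧ β - β' = ∑ i, c i • α i

/-!
If `β ≥ αᵢ`, then `s_{αⱼ} β = β - t αⱼ` differs from `β` only in its `αⱼ`-coordinate, so its
`αᵢ`-coordinate is still at least `1`. Being a root, `s_{αⱼ} β` then has all coordinates
nonnegative, and since `i ≠ j` subtracting `αᵢ` keeps them so. Bijectivity follows because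
`s_{αⱼ}` is an involution.
-/

section Reflection

variable {E : Type*} [NormedAddCommGroup E] [InnerProductSpace ℝ E] {β : E}

lemma inner_sRefl_left (hβ : β ≠ 0) (χ : E) : ⟪sRefl β χ, β⟫ = -⟪χ, β⟫ := by
  have hββ : ⟪β, β⟫ ≠ 0 := inner_self_ne_zero.mpr hβ
  rw [sRefl, inner_sub_left, real_inner_smul_left]
  field_simp
  ring

lemma sRefl_involutive (hβ : β ≠ 0) : Function.Involutive (sRefl β) := by
  intro χ
  rw [sRefl, inner_sRefl_left hβ, mul_neg, neg_div, neg_smul, sub_neg_eq_add, sRefl,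
    sub_add_cancel]

end Reflection

section SimpleSystem

variable {E : Type*} [NormedAddCommGroup E] [InnerProductSpace ℝ E] {Φ : Finset E} {r : ℕ}
  {α : Fin r → E}

lemma IsSimpleSystem.coeff_nonneg_of_coeff_pos (hα : IsSimpleSystem Φ α) {γ : E} (hγ : γ ∈ Φ)
    {c : Fin r → ℝ} (hγc : γ = ∑ k, c k • α k) {i : Fin r} (hi : 0 < c i) : ∀ k, 0 ≤ c k := by
  obtain ⟨d, hγd, hsign⟩ := hα.2.2.2 γ hγ
  obtain rfl : d = c := funext (Fintype.linearIndependent_iffₛ.mp hα.2.1 d c (hγd.symm.trans hγc))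
  exact hsign.resolve_right fun h => (h i).not_gt hi

lemma IsSimpleSystem.rootGE_sub_smul (hα : IsSimpleSystem Φ α) {i j : Fin r} (hij : i ≠ j)
    {β : E} (t : ℝ) (hβ : rootGE α β (α i)) (hβt : β - t • α j ∈ Φ) :
    rootGE α (β - t • α j) (α i) := by
  obtain ⟨c, hc, hβc⟩ := hβ
  set c' : Fin r → ℝ := c - Pi.single j t
  have hsub : β - t • α j - α i = ∑ k, c' k • α k := by
    simp only [c', Pi.sub_apply, sub_smul, Finset.sum_sub_distrib, Fintype.sum_single_smul, ← hβc]
    abel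
  have hβtc : β - t • α j = ∑ k, (c' k + (Pi.single i 1 : Fin r → ℝ) k) • α k := by
    simp only [add_smul, Finset.sum_add_distrib, Fintype.sum_single_smul, one_smul, ← hsub]
    abel
  have hc'i : c' i = c i := by simp [c', hij]
  have hpos : 0 < c' i + (Pi.single i 1 : Fin r → ℝ) i := by
    rw [hc'i, Pi.single_eq_same]
    linarith [hc i]
  refine ⟨c', fun k => ?_, hsub⟩
  rcases eq_or_ne k i with rfl | hki
  · exact hc'i ▸ hc k
  · simpa [hki] using hα.coeff_nonneg_of_coeff_pos hβt hβtc hpos k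

end SimpleSystem

theorem simple_reflection_bijOn_roots_ge_general
    {E : Type*} [NormedAddCommGroup E] [InnerProductSpace ℝ E]
    (Φ : Finset E) (hΦ : IsRootSystem Φ)
    {r : ℕ} (α : Fin r → E) (hα : IsSimpleSystem Φ α)
    (i j : Fin r) (hij : i ≠ j) :
    Set.BijOn (sRefl (α j))
      {β : E | β ∈ Φ ∧ rootGE α β (α i)} {β : E | β ∈ Φ ∧ rootGE α β (α i)} := by
  have hinv := sRefl_involutive (hΦ.1 _ (hα.1 j))
  have hmaps : Set.MapsTo (sRefl (α j))
      {β : E | β ∈ Φ ∧ rootGE α β (α i)} {β : E | β ∈ Φ ∧ rootGE α β (α i)} := by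
    rintro β ⟨hβΦ, hβ⟩
    have hsβ : sRefl (α j) β ∈ Φ := hΦ.2.2 _ (hα.1 j) _ hβΦ
    exact ⟨hsβ, hα.rootGE_sub_smul hij _ hβ hsβ⟩
  exact Set.InvOn.bijOn ⟨fun β _ => hinv β, fun β _ => hinv β⟩ hmaps hmaps

/-- **Step in the proof of Lemma 5.1 of the paper.** Let `Φ` be a finite root system with
simple system `α₁,…,α_r`, and let `i ≠ j`. Then the simple reflection `s_{αⱼ}` maps the set
`{β ∈ Φ : β ≥ αᵢ}` bijectively onto itself. -/
theorem simple_reflection_bijOn_roots_ge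
    {E : Type*} [NormedAddCommGroup E] [InnerProductSpace ℝ E] [FiniteDimensional ℝ E]
    (Φ : Finset E) (hΦ : IsRootSystem Φ)
    {r : ℕ} (α : Fin r → E) (hα : IsSimpleSystem Φ α)
    (i j : Fin r) (hij : i ≠ j) :
    Set.BijOn (sRefl (α j))
      {β : E | β ∈ Φ ∧ rootGE α β (α i)} {β : E | β ∈ Φ ∧ rootGE α β (α i)} :=
  simple_reflection_bijOn_roots_ge_general Φ hΦ α hα i j hij
end

section
/- Let Φ be a finite root system in a finite-dimensional real inner product space E with Weyl group W и fixed simple system Δ = {α₁,…,α_r}; write λ ≤ χ if χ − λ is a nonnegative linear combination of the simple roots. Let Π ⊆ E be a finite W-invariant set and let χ ∈ Π be a highest element of Π, i.e., λ ≤ χ for every λ ∈ Π. If w ∈ W and β ∈ Φ satisfy w(χ) + β ∈ Π, then (w(χ), β) < 0. -/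
open scoped RealInnerProductSpace

section aux
variable {E : Type*} [NormedAddCommGroup E] [InnerProductSpace ℝ E]

lemma sRefl_zero (x : E) : sRefl (0 : E) x = x := by
  simp [sRefl]

lemma sRefl_inner (γ x y : E) : ⟪sRefl γ x, sRefl γ y⟫ = ⟪x, y⟫ := by
  rcases eq_or_ne γ 0 with rfl | hγ
  · simp [sRefl]
  · have hg : ⟪γ, γ⟫ ≠ 0 := inner_self_ne_zero.2 hγ
    simp only [sRefl, inner_sub_left, inner_sub_right, real_inner_smul_left,
      real_inner_smul_right]
    rw [real_inner_comm γ x, real_inner_comm γ y]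
    field_simp
    ring

lemma sRefl_invol (γ x : E) : sRefl γ (sRefl γ x) = x := by
  rcases eq_or_ne γ 0 with rfl | hγ
  · simp [sRefl]
  · have hg : ⟪γ, γ⟫ ≠ 0 := inner_self_ne_zero.2 hγ
    simp only [sRefl, inner_sub_left, real_inner_smul_left]
    have key : 2 * (⟪x, γ⟫ - 2 * ⟪x, γ⟫ / ⟪γ, γ⟫ * ⟪γ, γ⟫) / ⟪γ, γ⟫
        = -(2 * ⟪x, γ⟫ / ⟪γ, γ⟫) := by field_simp; ring
    rw [key]
    module

lemma sRefl_add (γ x y : E) : sRefl γ (x + y) = sRefl γ x + sRefl γ y := by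
  simp only [sRefl, inner_add_left]
  have : 2 * (⟪x, γ⟫ + ⟪y, γ⟫) / ⟪γ, γ⟫
      = 2 * ⟪x, γ⟫ / ⟪γ, γ⟫ + 2 * ⟪y, γ⟫ / ⟪γ, γ⟫ := by ring
  rw [this, add_smul]
  abel

lemma foldr_inner (l : List E) (x y : E) :
    ⟪l.foldr sRefl x, l.foldr sRefl y⟫ = ⟪x, y⟫ := by
  induction l with
  | nil => rfl
  | cons γ t ih => simpa [List.foldr, sRefl_inner] using ih

lemma foldr_add (l : List E) (x y : E) :
    l.foldr sRefl (x + y) = l.foldr sRefl x + l.foldr sRefl y := by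
  induction l with
  | nil => rfl
  | cons γ t ih => simp [List.foldr, ih, sRefl_add]

lemma foldl_foldr (l : List E) (x : E) :
    l.foldl (fun y γ => sRefl γ y) (l.foldr sRefl x) = x := by
  induction l generalizing x with
  | nil => rfl
  | cons γ t ih => simpa [List.foldr, List.foldl, sRefl_invol] using ih x

lemma foldr_foldl (l : List E) (x : E) :
    l.foldr sRefl (l.foldl (fun y γ => sRefl γ y) x) = x := by
  induction l generalizing x with
  | nil => rfl
  | cons γ t ih => simp [List.foldr, List.foldl, ih, sRefl_invol]

lemma foldl_mem (S : Finset E) (hS : ∀ γ ∈ S, ∀ x ∈ S, sRefl γ x ∈ S)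
    (l : List E) (hl : ∀ γ ∈ l, γ ∈ S) (x : E) (hx : x ∈ S) :
    l.foldl (fun y γ => sRefl γ y) x ∈ S := by
  induction l generalizing x with
  | nil => exact hx
  | cons γ t ih =>
      exact ih (fun g hg => hl g (List.mem_cons_of_mem _ hg)) _
        (hS γ (hl γ List.mem_cons_self) x hx)

lemma foldl_mem' (S T : Finset E) (hS : ∀ γ ∈ T, ∀ x ∈ S, sRefl γ x ∈ S)
    (l : List E) (hl : ∀ γ ∈ l, γ ∈ T) (x : E) (hx : x ∈ S) :
    l.foldl (fun y γ => sRefl γ y) x ∈ S := by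
  induction l generalizing x with
  | nil => exact hx
  | cons γ t ih =>
      exact ih (fun g hg => hl g (List.mem_cons_of_mem _ hg)) _
        (hS γ (hl γ List.mem_cons_self) x hx)

end aux

/-- **Lemma 5.2 of the paper** (root-system form). Let `Φ` be a finite root system with
Weyl group `W` (whose elements are exactly the finite products of reflections `s_γ`, `γ ∈ Φ`)
and simple system `α₁,…,α_r`; write `λ ≤ χ` iff `χ − λ` is a nonnegative linear combination
of the simple roots. Let `Π ⊆ E` be a finite `W`-invariant set (equivalently, a finite set
invariant under every reflection `s_γ`, `γ ∈ Φ`) and let `χ ∈ Π` be a highest element of `Π`.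
If `w ∈ W` (given as a product `s_{γ₁} ∘ ⋯ ∘ s_{γ_m}` of reflections in roots) and `β ∈ Φ`
satisfy `w(χ) + β ∈ Π`, then `(w(χ), β) < 0`. -/
theorem inner_weyl_highest_weight_neg
    {E : Type*} [NormedAddCommGroup E] [InnerProductSpace ℝ E] [FiniteDimensional ℝ E]
    (Φ : Finset E) (hΦ : IsRootSystem Φ)
    {r : ℕ} (α : Fin r → E) (hα : IsSimpleSystem Φ α)
    (Pi : Finset E) (hPiInv : ∀ γ ∈ Φ, ∀ lam ∈ Pi, sRefl γ lam ∈ Pi)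
    (χ : E) (hχPi : χ ∈ Pi) (hχtop : ∀ lam ∈ Pi, rootGE α χ lam)
    (l : List E) (hl : ∀ γ ∈ l, γ ∈ Φ)
    (β : E) (hβ : β ∈ Φ)
    (hmem : l.foldr sRefl χ + β ∈ Pi) :
    ⟪l.foldr sRefl χ, β⟫ < 0 := by
  set γ : E := l.foldl (fun y g => sRefl g y) β with hγdef
  have hγΦ : γ ∈ Φ := foldl_mem Φ hΦ.2.2 l hl β hβ
  have hγ0 : γ ≠ 0 := hΦ.1 γ hγΦ
  have hwγ : l.foldr sRefl γ = β := foldr_foldl l β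
  -- χ + γ ∈ Pi
  have hχγ : χ + γ ∈ Pi := by
    have h1 : l.foldr sRefl (χ + γ) = l.foldr sRefl χ + β := by
      rw [foldr_add, hwγ]
    have h2 : χ + γ = l.foldl (fun y g => sRefl g y) (l.foldr sRefl χ + β) := by
      rw [← h1, foldl_foldr]
    rw [h2]
    exact foldl_mem' Pi Φ hPiInv l hl _ hmem
  -- reduce to ⟪χ, γ⟫ < 0
  have hinner : ⟪l.foldr sRefl χ, β⟫ = ⟪χ, γ⟫ := by
    rw [← hwγ, foldr_inner]
  rw [hinner]
  by_contra h
  push_neg at h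
  have hg : ⟪γ, γ⟫ ≠ 0 := inner_self_ne_zero.2 hγ0
  have hgpos : (0:ℝ) < ⟪γ, γ⟫ := lt_of_le_of_ne real_inner_self_nonneg (Ne.symm hg)
  obtain ⟨c, hc0, hc⟩ := hχtop (χ + γ) hχγ
  have hcγ : -γ = ∑ i, c i • α i := by
    rw [← hc]; abel
  set k : ℝ := 2 * ⟪χ, γ⟫ / ⟪γ, γ⟫ with hkdef
  have hk : 0 ≤ k := div_nonneg (by linarith) hgpos.le
  have hs : sRefl γ (χ + γ) = χ - (k + 1) • γ := by
    simp only [sRefl, inner_add_left]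
    have : 2 * (⟪χ, γ⟫ + ⟪γ, γ⟫) / ⟪γ, γ⟫ = k + 2 := by
      rw [hkdef]; field_simp
    rw [this]
    module
  have hmem2 : χ - (k + 1) • γ ∈ Pi := by
    rw [← hs]; exact hPiInv γ hγΦ _ hχγ
  obtain ⟨d, hd0, hd⟩ := hχtop _ hmem2
  have hdγ : (k + 1) • γ = ∑ i, d i • α i := by
    rw [← hd]; abel
  have hzero : ∑ i, (d i + (k + 1) * c i) • α i = 0 := by
    have heq : ∑ i, (d i + (k + 1) * c i) • α i
        = (∑ i, d i • α i) + (k + 1) • (∑ i, c i • α i) := by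
      rw [Finset.smul_sum, ← Finset.sum_add_distrib]
      exact Finset.sum_congr rfl fun i _ => by rw [add_smul, mul_smul]
    rw [heq, ← hcγ, ← hdγ, smul_neg, add_neg_cancel]
  have hlin := Fintype.linearIndependent_iff.mp hα.2.1 _ hzero
  have hczero : ∀ i, c i = 0 := by
    intro i
    have h1 := hlin i
    have h2 : 0 ≤ (k + 1) * c i := mul_nonneg (by linarith) (hc0 i)
    nlinarith [hd0 i, hc0 i]
  have : -γ = 0 := by
    rw [hcγ]
    simp [hczero]
  exact hγ0 (by simpa using this.symm ▸ (neg_eq_zero.mp this))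
end

section
/- Let Φ be a finite root system in a finite-dimensional real inner product space E with a fixed simple system {α₁,…,α_r} and irreducible components Φ₁,…,Φ_q. Let χ′ ∈ E satisfy (χ′, α_i) ≥ 0 for all i. Suppose that for each j = 1,…,q an index i_j is chosen with α_{i_j} ∈ Φ_j and (χ′, α_{i_j}) > (α_l, β) for every l ∈ {1,…,r} and every β ∈ Φ. Then for every root β such that β ≥ α_{i_j}, where Φ_j is the irreducible component containing β, and for every l ∈ {1,…,r}, one has (χ′ − α_l, β) ≥ 0; moreover the inequality is strict whenever (α_l, β) > 0. -/
open scoped RealInnerProductSpace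

/-- `Φ₀` is an irreducible component of `Φ`: a nonempty subset of `Φ` orthogonal to its
complement in `Φ` which cannot itself be written as the disjoint union of two nonempty
mutually orthogonal subsets. -/
def IsIrreducibleComponent {E : Type*} [NormedAddCommGroup E] [InnerProductSpace ℝ E]
    (Φ Φ₀ : Finset E) : Prop :=
  Φ₀ ⊆ Φ ∧ Φ₀.Nonempty ∧ (∀ a ∈ Φ₀, ∀ b ∈ Φ, b ∉ Φ₀ → ⟪a, b⟫ = 0) ∧
    ¬∃ Ψ₁ Ψ₂ : Finset E, Ψ₁.Nonempty ∧ Ψ₂.Nonempty ∧ Disjoint Ψ₁ Ψ₂ ∧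
      (∀ a ∈ Ψ₁, ∀ b ∈ Ψ₂, ⟪a, b⟫ = 0) ∧ (Φ₀ : Set E) = ↑Ψ₁ ∪ ↑Ψ₂

theorem inner_le_inner_of_rootGE {E : Type*} [NormedAddCommGroup E] [InnerProductSpace ℝ E]
    {r : ℕ} {α : Fin r → E} {χ β β' : E} (hχ : ∀ i, 0 ≤ ⟪χ, α i⟫) (hge : rootGE α β β') :
    ⟪χ, β'⟫ ≤ ⟪χ, β⟫ := by
  obtain ⟨c, hc, hsum⟩ := hge
  have hdiff : 0 ≤ ⟪χ, β - β'⟫ := by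
    rw [hsum, inner_sum]
    exact Finset.sum_nonneg fun i _ => by
      rw [real_inner_smul_right]
      exact mul_nonneg (hc i) (hχ i)
  rwa [inner_sub_right, sub_nonneg] at hdiff

theorem inner_highest_weight_sub_simple_nonneg_general
    {E : Type*} [NormedAddCommGroup E] [InnerProductSpace ℝ E]
    (Φ : Finset E)
    {r : ℕ} (α : Fin r → E)
    {q : ℕ} (Φc : Fin q → Finset E)
    (χ' : E) (hχ'dom : ∀ i, 0 ≤ ⟪χ', α i⟫)
    (ix : Fin q → Fin r)
    (hbig : ∀ j, ∀ l : Fin r, ∀ β ∈ Φ, ⟪α l, β⟫ < ⟪χ', α (ix j)⟫) :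
    ∀ β ∈ Φ, ∀ j, β ∈ Φc j → rootGE α β (α (ix j)) →
      ∀ l : Fin r, 0 ≤ ⟪χ' - α l, β⟫ ∧ (0 < ⟪α l, β⟫ → 0 < ⟪χ' - α l, β⟫) := by
  intro β hβ j _ hge l
  have hlt : ⟪α l, β⟫ < ⟪χ', β⟫ :=
    (hbig j l β hβ).trans_le (inner_le_inner_of_rootGE hχ'dom hge)
  have hpos : 0 < ⟪χ' - α l, β⟫ := by
    rwa [inner_sub_left, sub_pos]
  exact ⟨hpos.le, fun _ => hpos⟩

/-- **Key inequality in the proof of the main theorem of the paper.** Let `Φ` be a finite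
root system with simple system `α₁,…,α_r` and irreducible components `Φ₁,…,Φ_q`. Let
`χ' ∈ E` satisfy `(χ', αᵢ) ≥ 0` for all `i`, and for each `j` let `i_j` be an index with
`α_{i_j} ∈ Φ_j` and `(χ', α_{i_j}) > (α_l, β)` for every `l` and every `β ∈ Φ`. Then for
every root `β` with `β ≥ α_{i_j}`, where `Φ_j` is the irreducible component containing `β`,
and every `l`, one has `(χ' − α_l, β) ≥ 0`, with strict inequality whenever `(α_l, β) > 0`. -/
theorem inner_highest_weight_sub_simple_nonneg
    {E : Type*} [NormedAddCommGroup E] [InnerProductSpace ℝ E] [FiniteDimensional ℝ E]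
    (Φ : Finset E) (hΦ : IsRootSystem Φ)
    {r : ℕ} (α : Fin r → E) (hα : IsSimpleSystem Φ α)
    {q : ℕ} (Φc : Fin q → Finset E)
    (hΦc : ∀ j, IsIrreducibleComponent Φ (Φc j))
    (hcover : ∀ β ∈ Φ, ∃ j, β ∈ Φc j)
    (χ' : E) (hχ'dom : ∀ i, 0 ≤ ⟪χ', α i⟫)
    (ix : Fin q → Fin r) (hix : ∀ j, α (ix j) ∈ Φc j)
    (hbig : ∀ j, ∀ l : Fin r, ∀ β ∈ Φ, ⟪α l, β⟫ < ⟪χ', α (ix j)⟫) :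
    ∀ β ∈ Φ, ∀ j, β ∈ Φc j → rootGE α β (α (ix j)) →
      ∀ l : Fin r, 0 ≤ ⟪χ' - α l, β⟫ ∧ (0 < ⟪α l, β⟫ → 0 < ⟪χ' - α l, β⟫) :=
  inner_highest_weight_sub_simple_nonneg_general Φ α Φc χ' hχ'dom ix hbig
end

section
/- Let Φ be an irreducible finite root system in a finite-dimensional real inner product space E, with a fixed simple system Δ and Weyl group W. Let χ, t ∈ E be nonzero with (χ, t) = 0, and let k be the minimal natural number for which there exist simple roots λ₁,…,λ_k ∈ Δ with (s_{λ₁}⋯s_{λ_k}(χ), t) ≠ 0 (such k exists by irreducibility). Then for any simple roots λ₁,…,λ_k ∈ Δ with (s_{λ₁}⋯s_{λ_k}(χ), t) ≠ 0, one has (χ, λ_k) ≠ 0 and (χ, λ_i) = 0 for every 1 ≤ i < k. -/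
open scoped RealInnerProductSpace

lemma sRefl_adjoint {E : Type*} [NormedAddCommGroup E] [InnerProductSpace ℝ E]
    (β x y : E) : ⟪sRefl β x, y⟫ = ⟪x, sRefl β y⟫ := by
  simp only [sRefl, inner_sub_left, inner_sub_right, real_inner_smul_left,
    real_inner_smul_right]
  rw [real_inner_comm β y]
  ring

lemma inner_sRefl_right {E : Type*} [NormedAddCommGroup E] [InnerProductSpace ℝ E]
    (χ β y : E) : ⟪χ, sRefl β y⟫ = ⟪χ, y⟫ - (2 * ⟪y, β⟫ / ⟪β, β⟫) * ⟪χ, β⟫ := by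
  simp [sRefl, inner_sub_right, real_inner_smul_right]

lemma inner_foldr_eq_foldl {E : Type*} [NormedAddCommGroup E] [InnerProductSpace ℝ E]
    (L : List E) (x y : E) :
    ⟪L.foldr sRefl x, y⟫ = ⟪x, L.foldl (fun a b => sRefl b a) y⟫ := by
  induction L generalizing y with
  | nil => rfl
  | cons b L ih =>
    rw [List.foldr_cons, sRefl_adjoint, ih, List.foldl_cons]

/-- **Steps (3.8),(3.9) in the proof of Proposition 3.4 of the paper.** Let `Φ` be an
irreducible finite root system with simple system `Δ = {α₁,…,α_r}`. Let `χ, t ∈ E` be nonzero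
with `(χ, t) = 0`, and let `k` be minimal such that there are simple roots `λ₁,…,λ_k` with
`(s_{λ₁}⋯s_{λ_k}(χ), t) ≠ 0` (such `k` exists by irreducibility). Then for any simple roots
`λ₁,…,λ_k` with `(s_{λ₁}⋯s_{λ_k}(χ), t) ≠ 0` one has `(χ, λ_k) ≠ 0` and `(χ, λ_i) = 0` for
all `1 ≤ i < k`. -/
theorem minimal_word_inner_pattern
    {E : Type*} [NormedAddCommGroup E] [InnerProductSpace ℝ E] [FiniteDimensional ℝ E]
    (Φ : Finset E) (hΦ : IsIrreducibleRootSystem Φ)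
    {r : ℕ} (α : Fin r → E) (hα : IsSimpleSystem Φ α)
    (χ t : E) (hχ : χ ≠ 0) (ht : t ≠ 0) (horth : ⟪χ, t⟫ = 0)
    (k : ℕ)
    (hk : ∃ l : List (Fin r), l.length = k ∧ ⟪(l.map α).foldr sRefl χ, t⟫ ≠ 0)
    (hkmin : ∀ m < k, ¬∃ l : List (Fin r), l.length = m ∧
      ⟪(l.map α).foldr sRefl χ, t⟫ ≠ 0) :
    ∀ l : List (Fin r), l.length = k → ⟪(l.map α).foldr sRefl χ, t⟫ ≠ 0 →
      (∀ m : Fin l.length, (m : ℕ) + 1 < k → ⟪χ, α (l.get m)⟫ = 0) ∧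
      ∀ h : l ≠ [], ⟪χ, α (l.getLast h)⟫ ≠ 0 := by
  classical
  have hmin' : ∀ l' : List (Fin r), l'.length < k →
      ⟪χ, ((l'.map α).foldl (fun a b => sRefl b a) t)⟫ = 0 := by
    intro l' hl'
    by_contra hne
    exact hkmin _ hl' ⟨l', rfl, by rwa [inner_foldr_eq_foldl]⟩
  intro l hlen hinner
  rw [inner_foldr_eq_foldl] at hinner
  constructor
  · intro m hm
    by_contra hc
    set j : ℕ := (m : ℕ) with hj
    have hjl : j < l.length := m.isLt
    set y : E := ((l.take j).map α).foldl (fun a b => sRefl b a) t with hy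
    have h1 : ⟪χ, y⟫ = 0 := hmin' _ (by simp [List.length_take]; omega)
    have htake : l.take (j + 1) = l.take j ++ [l.get m] := by
      rw [← List.take_concat_get hjl, List.concat_eq_append]
      rfl
    have h2 : ⟪χ, sRefl (α (l.get m)) y⟫ = 0 := by
      have h := hmin' (l.take (j + 1)) (by simp [List.length_take]; omega)
      rwa [htake, List.map_append, List.foldl_append, List.map_singleton,
        List.foldl_cons, List.foldl_nil] at h
    have hcz : (2 * ⟪y, α (l.get m)⟫ / ⟪α (l.get m), α (l.get m)⟫) = 0 := by
      rw [inner_sRefl_right, h1] at h2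
      have : (2 * ⟪y, α (l.get m)⟫ / ⟪α (l.get m), α (l.get m)⟫) * ⟪χ, α (l.get m)⟫ = 0 := by
        linarith
      exact (mul_eq_zero.mp this).resolve_right hc
    have hfix : sRefl (α (l.get m)) y = y := by
      rw [sRefl, hcz, zero_smul, sub_zero]
    have hsplit : l = l.take (j + 1) ++ l.drop (j + 1) := (List.take_append_drop _ _).symm
    set l' : List (Fin r) := l.take j ++ l.drop (j + 1) with hl'
    have hlen' : l'.length < k := by
      simp [hl', List.length_take, List.length_drop]
      omega
    have heq : ((l'.map α).foldl (fun a b => sRefl b a) t)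
        = ((l.map α).foldl (fun a b => sRefl b a) t) := by
      conv_rhs => rw [hsplit, htake]
      rw [hl']
      simp only [List.map_append, List.foldl_append, List.map_singleton,
        List.foldl_cons, List.foldl_nil, ← hy, hfix]
    exact hinner (heq ▸ hmin' l' hlen')
  · intro hne
    have hk0 : 0 < k := by rw [← hlen]; exact List.length_pos_iff.mpr hne
    have hsplit : l.dropLast ++ [l.getLast hne] = l := List.dropLast_append_getLast hne
    set y : E := ((l.dropLast.map α).foldl (fun a b => sRefl b a) t) with hy
    have h1 : ⟪χ, y⟫ = 0 := hmin' _ (by simp [List.length_dropLast]; omega)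
    rw [← hsplit, List.map_append, List.foldl_append, List.map_singleton,
      List.foldl_cons, List.foldl_nil, ← hy, inner_sRefl_right, h1] at hinner
    intro hzero
    apply hinner
    rw [hzero]
    ring
end
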